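/- arXiv:2512.14886 — 3 statements merged into one kernel-verified Lean document; each statement's English description precedes it below -/
import Mathlib

section
/- Each of the five signed graphs M_1, M_2, M_3, M_4, M_5 is not a chordal signed bigraph, yet deleting any single vertex from any of them yields a chordal signed bigraph; moreover, every signed graph in F_1 ∪ F_2 ∪ F_3 ∪ F_4 contains one of M_1,…,M_5 as an induced subgraph. -/
universe u

/-! ## Basic unsigned notions for bipartite graphs -/

/-- `G` has an induced cycle of length at least 6 (signs, if any, are arbitrary). -/
def HasLongInducedCycle {V : Type u} (G : SimpleGraph V) : Prop :=
  ∃ n : ℕ, 6 ≤ n ∧ ∃ f : ZMod n → V, Function.Injective f ∧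
    ∀ i j : ZMod n, G.Adj (f i) (f j) ↔ (j = i + 1 ∨ i = j + 1)

/-- A graph is separable if it contains an induced `2K₂`. -/
def IsSeparableGraph {V : Type u} (G : SimpleGraph V) : Prop :=
  ∃ a b c d : V, [a, b, c, d].Pairwise (· ≠ ·) ∧
    G.Adj a b ∧ G.Adj c d ∧ ¬ G.Adj a c ∧ ¬ G.Adj a d ∧ ¬ G.Adj b c ∧ ¬ G.Adj b d

/-- An edge `ab` of a bipartite graph is simplicial if every vertex of `N(a) - {b}`
is adjacent to every vertex of `N(b) - {a}`. -/
def SimplicialEdge {V : Type u} (G : SimpleGraph V) (a b : V) : Prop :=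
  G.Adj a b ∧ ∀ c ∈ G.neighborSet a \ {b}, ∀ d ∈ G.neighborSet b \ {a}, G.Adj c d

/-- A canonical ordering of a bigraph with bipartition given by `side`
(`X` is the `side = true` part, `Y` the `side = false` part): the neighbourhoods of
the `x`'s are decreasing and those of the `y`'s are increasing. -/
def IsCanonicalOrdering {V : Type u} (G : SimpleGraph V) (side : V → Bool)
    {α β : ℕ} (x : Fin α → V) (y : Fin β → V) : Prop :=
  Function.Injective x ∧ Function.Injective y ∧
  (∀ w : V, side w = true ↔ w ∈ Set.range x) ∧
  (∀ w : V, side w = false ↔ w ∈ Set.range y) ∧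
  (∀ i j : Fin α, i ≤ j → G.neighborSet (x j) ⊆ G.neighborSet (x i)) ∧
  (∀ i j : Fin β, i ≤ j → G.neighborSet (y i) ⊆ G.neighborSet (y j))

/-- `H` is a non-trivial (i.e. containing at least one edge) connected component
of `G - S`. -/
def IsNontrivialComponentOf {V : Type u} (G : SimpleGraph V) (S H : Set V) : Prop :=
  H ⊆ Sᶜ ∧ (G.induce H).Connected ∧
  (∀ a ∈ H, ∀ b ∈ Sᶜ, G.Adj a b → b ∈ H) ∧
  (∃ a ∈ H, ∃ b ∈ H, G.Adj a b)

/-- `S` minimally separates the non-trivial components `H` and `H'` of `G - S`: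
every vertex of `S` has a neighbour in `H` and a neighbour in `H'`. -/
def MinimallySeparates {V : Type u} (G : SimpleGraph V) (S H H' : Set V) : Prop :=
  IsNontrivialComponentOf G S H ∧ IsNontrivialComponentOf G S H' ∧ H ≠ H' ∧
  ∀ s ∈ S, (∃ a ∈ H, G.Adj s a) ∧ (∃ a ∈ H', G.Adj s a)

/-! ## Signed bigraphs -/

/-- A signed bigraph: a bipartite graph (with bipartition recorded by `side`)
whose edges carry a sign (`true` = positive, `false` = negative). -/
structure SignedBigraph (V : Type u) where
  graph : SimpleGraph V
  sign : V → V → Bool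
  sign_symm : ∀ a b : V, sign a b = sign b a
  side : V → Bool
  bipartite : ∀ ⦃a b : V⦄, graph.Adj a b → side a ≠ side b

namespace SignedBigraph

variable {V : Type u}

def Adj (G : SignedBigraph V) (a b : V) : Prop := G.graph.Adj a b

/-- `N(ab) = (N(a) ∪ N(b)) - {a, b}`. -/
def edgeNbhd (G : SignedBigraph V) (a b : V) : Set V :=
  (G.graph.neighborSet a ∪ G.graph.neighborSet b) \ {a, b}

/-- The edge `ab` is signed simplicial: `N(ab)` induces a positive biclique. -/
def SignedSimplicial (G : SignedBigraph V) (a b : V) : Prop :=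
  G.Adj a b ∧
    ∀ c ∈ G.edgeNbhd a b, ∀ d ∈ G.edgeNbhd a b,
      G.side c ≠ G.side d → (G.Adj c d ∧ G.sign c d = true)

/-- Delete a set of edges from a signed bigraph (keeping all vertices). -/
def deleteEdges (G : SignedBigraph V) (s : Set (Sym2 V)) : SignedBigraph V where
  graph := G.graph.deleteEdges s
  sign := G.sign
  sign_symm := G.sign_symm
  side := G.side
  bipartite := by
    intro a b h
    exact G.bipartite (SimpleGraph.deleteEdges_adj.mp h).1

/-- The induced signed subgraph on a set of vertices. -/
def induce (G : SignedBigraph V) (A : Set V) : SignedBigraph A where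
  graph := G.graph.induce A
  sign a b := G.sign a b
  sign_symm a b := G.sign_symm a b
  side a := G.side a
  bipartite := by
    intro a b h
    exact G.bipartite h

/-- A chordal signed bigraph: the edges can be ordered `e₁, …, e_m` so that each `eᵢ`
is a signed simplicial edge of the signed bigraph obtained by deleting `e₁, …, e_{i-1}`. -/
def IsChordal (G : SignedBigraph V) : Prop :=
  ∃ l : List (Sym2 V), l.Nodup ∧ (∀ e, e ∈ G.graph.edgeSet ↔ e ∈ l) ∧
    ∀ (i : ℕ) (h : i < l.length), ∃ a b : V,
      l.get ⟨i, h⟩ = s(a, b) ∧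
      (G.deleteEdges {e | e ∈ l.take i}).SignedSimplicial a b

/-! ## Forbidden patterns F₁ – F₆, D, long cycles -/

/-- `G` contains the all-negative 4-cycle `F₁` as an induced subgraph. -/
def HasF1 (G : SignedBigraph V) : Prop :=
  ∃ u1 u2 v1 v2 : V,
    [u1, u2, v1, v2].Pairwise (· ≠ ·) ∧
    G.Adj u1 v1 ∧ G.Adj u1 v2 ∧ G.Adj u2 v1 ∧ G.Adj u2 v2 ∧
    ¬ G.Adj u1 u2 ∧ ¬ G.Adj v1 v2 ∧
    G.sign u1 v1 = false ∧ G.sign u1 v2 = false ∧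
    G.sign u2 v1 = false ∧ G.sign u2 v2 = false

/-- `G` contains a member of `F₂` (a signed `K_{2,3}`) as an induced subgraph. -/
def HasF2 (G : SignedBigraph V) : Prop :=
  ∃ u1 u2 v1 v2 v3 : V,
    [u1, u2, v1, v2, v3].Pairwise (· ≠ ·) ∧
    G.Adj u1 v1 ∧ G.Adj u1 v2 ∧ G.Adj u1 v3 ∧
    G.Adj u2 v1 ∧ G.Adj u2 v2 ∧ G.Adj u2 v3 ∧
    ¬ G.Adj u1 u2 ∧ ¬ G.Adj v1 v2 ∧ ¬ G.Adj v1 v3 ∧ ¬ G.Adj v2 v3 ∧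
    G.sign u1 v1 = false ∧ G.sign u1 v2 = false ∧
    G.sign u2 v2 = false ∧ G.sign u2 v3 = false

/-- `G` contains a member of `F₃` (a signed `K_{2,4}`) as an induced subgraph. -/
def HasF3 (G : SignedBigraph V) : Prop :=
  ∃ u1 u2 v1 v2 v3 v4 : V,
    [u1, u2, v1, v2, v3, v4].Pairwise (· ≠ ·) ∧
    G.Adj u1 v1 ∧ G.Adj u1 v2 ∧ G.Adj u1 v3 ∧ G.Adj u1 v4 ∧
    G.Adj u2 v1 ∧ G.Adj u2 v2 ∧ G.Adj u2 v3 ∧ G.Adj u2 v4 ∧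
    ¬ G.Adj u1 u2 ∧ ¬ G.Adj v1 v2 ∧ ¬ G.Adj v1 v3 ∧ ¬ G.Adj v1 v4 ∧
    ¬ G.Adj v2 v3 ∧ ¬ G.Adj v2 v4 ∧ ¬ G.Adj v3 v4 ∧
    G.sign u1 v1 = false ∧ G.sign u1 v2 = false ∧
    G.sign u2 v3 = false ∧ G.sign u2 v4 = false

/-- `G` contains a member of `F₄` (a signed `K_{3,3}` with negative perfect matching)
as an induced subgraph. -/
def HasF4 (G : SignedBigraph V) : Prop :=
  ∃ u1 u2 u3 v1 v2 v3 : V,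
    [u1, u2, u3, v1, v2, v3].Pairwise (· ≠ ·) ∧
    G.Adj u1 v1 ∧ G.Adj u1 v2 ∧ G.Adj u1 v3 ∧
    G.Adj u2 v1 ∧ G.Adj u2 v2 ∧ G.Adj u2 v3 ∧
    G.Adj u3 v1 ∧ G.Adj u3 v2 ∧ G.Adj u3 v3 ∧
    ¬ G.Adj u1 u2 ∧ ¬ G.Adj u1 u3 ∧ ¬ G.Adj u2 u3 ∧
    ¬ G.Adj v1 v2 ∧ ¬ G.Adj v1 v3 ∧ ¬ G.Adj v2 v3 ∧
    G.sign u1 v1 = false ∧ G.sign u2 v2 = false ∧ G.sign u3 v3 = false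

/-- `G` contains a member of `F₅` as an induced subgraph. -/
def HasF5 (G : SignedBigraph V) : Prop :=
  ∃ x1 x2 x3 y1 y2 y3 : V,
    [x1, x2, x3, y1, y2, y3].Pairwise (· ≠ ·) ∧
    G.Adj x1 y1 ∧ G.Adj x1 y2 ∧ ¬ G.Adj x1 y3 ∧
    G.Adj x2 y1 ∧ G.Adj x2 y2 ∧ G.Adj x2 y3 ∧
    G.Adj x3 y1 ∧ G.Adj x3 y2 ∧ G.Adj x3 y3 ∧
    ¬ G.Adj x1 x2 ∧ ¬ G.Adj x1 x3 ∧ ¬ G.Adj x2 x3 ∧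
    ¬ G.Adj y1 y2 ∧ ¬ G.Adj y1 y3 ∧ ¬ G.Adj y2 y3 ∧
    G.sign x2 y1 = false ∧ G.sign x3 y2 = false

/-- `G` contains a member of `F₆` as an induced subgraph. -/
def HasF6 (G : SignedBigraph V) : Prop :=
  ∃ x1 x2 x3 x4 y1 y2 y3 y4 : V,
    [x1, x2, x3, x4, y1, y2, y3, y4].Pairwise (· ≠ ·) ∧
    G.Adj x1 y1 ∧ G.Adj x1 y2 ∧ ¬ G.Adj x1 y3 ∧ ¬ G.Adj x1 y4 ∧
    G.Adj x2 y1 ∧ G.Adj x2 y2 ∧ ¬ G.Adj x2 y3 ∧ ¬ G.Adj x2 y4 ∧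
    G.Adj x3 y1 ∧ G.Adj x3 y2 ∧ G.Adj x3 y3 ∧ G.Adj x3 y4 ∧
    G.Adj x4 y1 ∧ G.Adj x4 y2 ∧ G.Adj x4 y3 ∧ G.Adj x4 y4 ∧
    ¬ G.Adj x1 x2 ∧ ¬ G.Adj x1 x3 ∧ ¬ G.Adj x1 x4 ∧
    ¬ G.Adj x2 x3 ∧ ¬ G.Adj x2 x4 ∧ ¬ G.Adj x3 x4 ∧
    ¬ G.Adj y1 y2 ∧ ¬ G.Adj y1 y3 ∧ ¬ G.Adj y1 y4 ∧
    ¬ G.Adj y2 y3 ∧ ¬ G.Adj y2 y4 ∧ ¬ G.Adj y3 y4 ∧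
    G.sign x1 y1 = false ∧ G.sign x2 y1 = false ∧ G.sign x3 y2 = false ∧
    G.sign x4 y3 = false ∧ G.sign x4 y4 = false

/-- `G` contains a member of `D` (a 6-cycle `x₁y₁x₂y₃x₃y₂x₁` plus a negative chord
`x₂y₂`) as an induced subgraph. -/
def HasD (G : SignedBigraph V) : Prop :=
  ∃ x1 x2 x3 y1 y2 y3 : V,
    [x1, x2, x3, y1, y2, y3].Pairwise (· ≠ ·) ∧
    G.Adj x1 y1 ∧ G.Adj y1 x2 ∧ G.Adj x2 y3 ∧ G.Adj y3 x3 ∧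
    G.Adj x3 y2 ∧ G.Adj y2 x1 ∧
    G.Adj x2 y2 ∧ G.sign x2 y2 = false ∧
    ¬ G.Adj x1 y3 ∧ ¬ G.Adj x3 y1 ∧
    ¬ G.Adj x1 x2 ∧ ¬ G.Adj x1 x3 ∧ ¬ G.Adj x2 x3 ∧
    ¬ G.Adj y1 y2 ∧ ¬ G.Adj y1 y3 ∧ ¬ G.Adj y2 y3

/-- `G` contains an induced signed cycle of length at least 6. -/
def HasLongCycle (G : SignedBigraph V) : Prop :=
  HasLongInducedCycle G.graph

/-! ## Minimal forbidden patterns M₁ – M₅ for complete bigraphs -/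

def HasM1 (G : SignedBigraph V) : Prop := G.HasF1

def HasM2 (G : SignedBigraph V) : Prop :=
  ∃ u1 u2 v1 v2 v3 : V,
    [u1, u2, v1, v2, v3].Pairwise (· ≠ ·) ∧
    G.Adj u1 v1 ∧ G.Adj u1 v2 ∧ G.Adj u1 v3 ∧
    G.Adj u2 v1 ∧ G.Adj u2 v2 ∧ G.Adj u2 v3 ∧
    ¬ G.Adj u1 u2 ∧ ¬ G.Adj v1 v2 ∧ ¬ G.Adj v1 v3 ∧ ¬ G.Adj v2 v3 ∧
    G.sign u1 v1 = false ∧ G.sign u1 v2 = false ∧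
    G.sign u2 v2 = false ∧ G.sign u2 v3 = false ∧
    G.sign u1 v3 = true ∧ G.sign u2 v1 = true

def HasM3 (G : SignedBigraph V) : Prop :=
  ∃ u1 u2 v1 v2 v3 v4 : V,
    [u1, u2, v1, v2, v3, v4].Pairwise (· ≠ ·) ∧
    G.Adj u1 v1 ∧ G.Adj u1 v2 ∧ G.Adj u1 v3 ∧ G.Adj u1 v4 ∧
    G.Adj u2 v1 ∧ G.Adj u2 v2 ∧ G.Adj u2 v3 ∧ G.Adj u2 v4 ∧
    ¬ G.Adj u1 u2 ∧ ¬ G.Adj v1 v2 ∧ ¬ G.Adj v1 v3 ∧ ¬ G.Adj v1 v4 ∧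
    ¬ G.Adj v2 v3 ∧ ¬ G.Adj v2 v4 ∧ ¬ G.Adj v3 v4 ∧
    G.sign u1 v1 = false ∧ G.sign u1 v2 = false ∧
    G.sign u2 v3 = false ∧ G.sign u2 v4 = false ∧
    G.sign u1 v3 = true ∧ G.sign u1 v4 = true ∧
    G.sign u2 v1 = true ∧ G.sign u2 v2 = true

def HasM4 (G : SignedBigraph V) : Prop :=
  ∃ u1 u2 u3 v1 v2 v3 : V,
    [u1, u2, u3, v1, v2, v3].Pairwise (· ≠ ·) ∧
    G.Adj u1 v1 ∧ G.Adj u1 v2 ∧ G.Adj u1 v3 ∧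
    G.Adj u2 v1 ∧ G.Adj u2 v2 ∧ G.Adj u2 v3 ∧
    G.Adj u3 v1 ∧ G.Adj u3 v2 ∧ G.Adj u3 v3 ∧
    ¬ G.Adj u1 u2 ∧ ¬ G.Adj u1 u3 ∧ ¬ G.Adj u2 u3 ∧
    ¬ G.Adj v1 v2 ∧ ¬ G.Adj v1 v3 ∧ ¬ G.Adj v2 v3 ∧
    G.sign u1 v1 = false ∧ G.sign u2 v2 = false ∧ G.sign u3 v3 = false ∧
    G.sign u1 v2 = true ∧ G.sign u1 v3 = true ∧ G.sign u2 v1 = true ∧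
    G.sign u2 v3 = true ∧ G.sign u3 v1 = true ∧ G.sign u3 v2 = true

def HasM5 (G : SignedBigraph V) : Prop :=
  ∃ x1 x2 x3 y1 y2 y3 : V,
    [x1, x2, x3, y1, y2, y3].Pairwise (· ≠ ·) ∧
    G.Adj x1 y1 ∧ G.Adj x1 y2 ∧ G.Adj x1 y3 ∧
    G.Adj x2 y1 ∧ G.Adj x2 y2 ∧ G.Adj x2 y3 ∧
    G.Adj x3 y1 ∧ G.Adj x3 y2 ∧ G.Adj x3 y3 ∧
    ¬ G.Adj x1 x2 ∧ ¬ G.Adj x1 x3 ∧ ¬ G.Adj x2 x3 ∧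
    ¬ G.Adj y1 y2 ∧ ¬ G.Adj y1 y3 ∧ ¬ G.Adj y2 y3 ∧
    G.sign x1 y1 = false ∧ G.sign x1 y2 = false ∧
    G.sign x2 y2 = false ∧ G.sign x3 y3 = false ∧
    G.sign x1 y3 = true ∧ G.sign x2 y1 = true ∧ G.sign x2 y3 = true ∧
    G.sign x3 y1 = true ∧ G.sign x3 y2 = true

/-! ## The patterns W₁ – W₆ (relativized to an ambient vertex set `A`, with the
distinguished vertices being exactly the vertices in `S`). -/

def HasW1In (G : SignedBigraph V) (A S : Set V) : Prop :=
  ∃ u y x z : V, u ∈ A ∧ y ∈ A ∧ x ∈ A ∧ z ∈ A ∧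
    [u, y, x, z].Pairwise (· ≠ ·) ∧
    G.Adj u y ∧ G.Adj u z ∧ G.Adj x y ∧ G.Adj x z ∧
    ¬ G.Adj u x ∧ ¬ G.Adj y z ∧
    G.sign x y = false ∧ G.sign x z = false ∧
    x ∈ S ∧ u ∉ S ∧ y ∉ S ∧ z ∉ S

def HasW2In (G : SignedBigraph V) (A S : Set V) : Prop :=
  ∃ u y v z p : V, u ∈ A ∧ y ∈ A ∧ v ∈ A ∧ z ∈ A ∧ p ∈ A ∧
    [u, y, v, z, p].Pairwise (· ≠ ·) ∧
    G.Adj u y ∧ G.Adj u z ∧ G.Adj v y ∧ G.Adj v z ∧ G.Adj p v ∧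
    ¬ G.Adj u v ∧ ¬ G.Adj y z ∧ ¬ G.Adj p u ∧ ¬ G.Adj p y ∧ ¬ G.Adj p z ∧
    G.sign v y = false ∧ G.sign v z = false ∧
    p ∈ S ∧ u ∉ S ∧ y ∉ S ∧ v ∉ S ∧ z ∉ S

def HasW3In (G : SignedBigraph V) (A S : Set V) : Prop :=
  ∃ u y v z p : V, u ∈ A ∧ y ∈ A ∧ v ∈ A ∧ z ∈ A ∧ p ∈ A ∧
    [u, y, v, z, p].Pairwise (· ≠ ·) ∧
    G.Adj u y ∧ G.Adj u z ∧ G.Adj v y ∧ G.Adj v z ∧ G.Adj p v ∧ G.Adj p u ∧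
    ¬ G.Adj u v ∧ ¬ G.Adj y z ∧ ¬ G.Adj p y ∧ ¬ G.Adj p z ∧
    G.sign v y = false ∧ G.sign v z = false ∧ G.sign p u = false ∧
    p ∈ S ∧ u ∉ S ∧ y ∉ S ∧ v ∉ S ∧ z ∉ S

def HasW4In (G : SignedBigraph V) (A S : Set V) : Prop :=
  ∃ u y c z p q : V, u ∈ A ∧ y ∈ A ∧ c ∈ A ∧ z ∈ A ∧ p ∈ A ∧ q ∈ A ∧
    [u, y, c, z, p, q].Pairwise (· ≠ ·) ∧
    G.Adj u y ∧ G.Adj u z ∧ G.Adj c y ∧ G.Adj c z ∧ G.Adj p c ∧ G.Adj p u ∧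
    G.Adj q p ∧
    ¬ G.Adj u c ∧ ¬ G.Adj y z ∧ ¬ G.Adj p y ∧ ¬ G.Adj p z ∧
    ¬ G.Adj q u ∧ ¬ G.Adj q y ∧ ¬ G.Adj q c ∧ ¬ G.Adj q z ∧
    G.sign c y = false ∧ G.sign c z = false ∧ G.sign p u = false ∧
    q ∈ S ∧ u ∉ S ∧ y ∉ S ∧ c ∉ S ∧ z ∉ S ∧ p ∉ S

def HasW5In (G : SignedBigraph V) (A S : Set V) : Prop :=
  ∃ u y v z x : V, u ∈ A ∧ y ∈ A ∧ v ∈ A ∧ z ∈ A ∧ x ∈ A ∧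
    [u, y, v, z, x].Pairwise (· ≠ ·) ∧
    G.Adj u y ∧ G.Adj u z ∧ G.Adj v y ∧ G.Adj v z ∧ G.Adj x v ∧ G.Adj x u ∧
    ¬ G.Adj u v ∧ ¬ G.Adj y z ∧ ¬ G.Adj x y ∧ ¬ G.Adj x z ∧
    G.sign v y = false ∧ G.sign x u = false ∧
    x ∈ S ∧ y ∈ S ∧ u ∉ S ∧ v ∉ S ∧ z ∉ S

def HasW6In (G : SignedBigraph V) (A S : Set V) : Prop :=
  ∃ u y v z x : V, u ∈ A ∧ y ∈ A ∧ v ∈ A ∧ z ∈ A ∧ x ∈ A ∧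
    [u, y, v, z, x].Pairwise (· ≠ ·) ∧
    G.Adj u y ∧ G.Adj u z ∧ G.Adj v y ∧ G.Adj v z ∧ G.Adj x v ∧
    ¬ G.Adj u v ∧ ¬ G.Adj y z ∧ ¬ G.Adj x u ∧ ¬ G.Adj x y ∧ ¬ G.Adj x z ∧
    G.sign v y = false ∧
    x ∈ S ∧ y ∈ S ∧ u ∉ S ∧ v ∉ S ∧ z ∉ S

/-! ## Tadpoles, sums and joins -/

/-- The vertex set of a tadpole with heads `w, y, z` and path vertices `x`. -/
def tadVerts {n : ℕ} (w y z : V) (x : Fin n → V) : Set V :=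
  {w, y, z} ∪ Set.range x

/-- The data `(w, y, z, x)` forms an induced tadpole in `G`:
`w, y, z, x ⟨k⟩` induce a 4-cycle whose edges `x ⟨k⟩ y` and `x ⟨k⟩ z` are negative,
together with the induced path `x ⟨k⟩, x ⟨k-1⟩, …, x 0`; the vertex `x 0` is the end
and `w, y, z` are the heads.  If `t2 = true` the tadpole is of type 2: there is
additionally a negative edge from `w` to `x ⟨k-1⟩`.
(The paper's parameter `k ≥ 1` corresponds to `k + 1` here.) -/
structure IsInducedTadpole (G : SignedBigraph V) (k : ℕ) (t2 : Bool)
    (w y z : V) (x : Fin (k + 1) → V) : Prop where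
  t2_len : t2 = true → 1 ≤ k
  inj : Function.Injective x
  w_notmem : ∀ i, w ≠ x i
  y_notmem : ∀ i, y ≠ x i
  z_notmem : ∀ i, z ≠ x i
  wy : w ≠ y
  wz : w ≠ z
  yz : y ≠ z
  adj_wy : G.Adj w y
  adj_wz : G.Adj w z
  not_adj_yz : ¬ G.Adj y z
  adj_path : ∀ i j : Fin (k + 1), G.Adj (x i) (x j) ↔ (i.1 + 1 = j.1 ∨ j.1 + 1 = i.1)
  adj_y : ∀ i : Fin (k + 1), G.Adj y (x i) ↔ i.1 = k
  adj_z : ∀ i : Fin (k + 1), G.Adj z (x i) ↔ i.1 = k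
  adj_w : ∀ i : Fin (k + 1), G.Adj w (x i) ↔ (t2 = true ∧ i.1 + 1 = k)
  sign_y : ∀ i : Fin (k + 1), i.1 = k → G.sign (x i) y = false
  sign_z : ∀ i : Fin (k + 1), i.1 = k → G.sign (x i) z = false
  sign_w : ∀ i : Fin (k + 1), t2 = true → i.1 + 1 = k → G.sign w (x i) = false

/-- `G` contains a sum of two tadpoles (identified at their ends) as an induced
subgraph. -/
def HasTadpoleSum (G : SignedBigraph V) : Prop :=
  ∃ (k k' : ℕ) (t t' : Bool) (w y z w' y' z' : V)
    (x : Fin (k + 1) → V) (x' : Fin (k' + 1) → V),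
    G.IsInducedTadpole k t w y z x ∧ G.IsInducedTadpole k' t' w' y' z' x' ∧
    x 0 = x' 0 ∧
    tadVerts w y z x ∩ tadVerts w' y' z' x' = {x 0} ∧
    ∀ a ∈ tadVerts w y z x, ∀ b ∈ tadVerts w' y' z' x',
      a ≠ x 0 → b ≠ x' 0 → ¬ G.Adj a b

/-- `G` contains a join of two tadpoles as an induced subgraph: two disjoint induced
tadpoles such that the edges between them are exactly those joining the end of each
tadpole to all vertices of the other tadpole in the opposite partite set; all these
edges are positive, except that the edge from an end to the head `w` of the other
tadpole may be of either sign when that tadpole is a member of `W₁` (i.e. has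
`k = 0` and is of type 1), in which case the ends are required to be adjacent. -/
def HasTadpoleJoin (G : SignedBigraph V) : Prop :=
  ∃ (k k' : ℕ) (t t' : Bool) (w y z w' y' z' : V)
    (x : Fin (k + 1) → V) (x' : Fin (k' + 1) → V),
    G.IsInducedTadpole k t w y z x ∧ G.IsInducedTadpole k' t' w' y' z' x' ∧
    Disjoint (tadVerts w y z x) (tadVerts w' y' z' x') ∧
    (∀ a ∈ tadVerts w y z x, ∀ b ∈ tadVerts w' y' z' x',
      (G.Adj a b ↔ ((a = x 0 ∨ b = x' 0) ∧ G.side a ≠ G.side b))) ∧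
    ((k = 0 ∧ t = false) ∨ (k' = 0 ∧ t' = false) → G.side (x 0) ≠ G.side (x' 0)) ∧
    (∀ a ∈ tadVerts w y z x, ∀ b ∈ tadVerts w' y' z' x', G.Adj a b →
      ¬ (a = x 0 ∧ b = w' ∧ k' = 0 ∧ t' = false) →
      ¬ (a = w ∧ b = x' 0 ∧ k = 0 ∧ t = false) →
      G.sign a b = true)

/-- `G` contains a member of
`ℱ = F₁ ∪ F₂ ∪ F₃ ∪ F₄ ∪ F₅ ∪ F₆ ∪ 𝒞 ∪ D ∪ 𝒮 ∪ 𝒥` as an induced subgraph. -/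
def HasForbidden (G : SignedBigraph V) : Prop :=
  G.HasF1 ∨ G.HasF2 ∨ G.HasF3 ∨ G.HasF4 ∨ G.HasF5 ∨ G.HasF6 ∨
  G.HasLongCycle ∨ G.HasD ∨ G.HasTadpoleSum ∨ G.HasTadpoleJoin

/-- `G` is `ℱ`-free. -/
def FFree (G : SignedBigraph V) : Prop := ¬ G.HasForbidden

end SignedBigraph

/-! ## Concrete complete signed bipartite graphs (for the graphs M₁ – M₅) -/

/-- The complete bipartite graph on `Fin a ⊕ Fin b`. -/
def cbsGraph (a b : ℕ) : SimpleGraph (Fin a ⊕ Fin b) where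
  Adj u v := u.isLeft ≠ v.isLeft
  symm := ⟨fun _ _ h => Ne.symm h⟩
  loopless := ⟨fun _ h => h rfl⟩

def cbsSign {a b : ℕ} (sgn : Fin a → Fin b → Bool) :
    Fin a ⊕ Fin b → Fin a ⊕ Fin b → Bool
  | Sum.inl i, Sum.inr j => sgn i j
  | Sum.inr j, Sum.inl i => sgn i j
  | _, _ => true

/-- The complete signed bipartite graph with parts `Fin a`, `Fin b`, and signs given
by `sgn`. -/
def completeSignedBigraph (a b : ℕ) (sgn : Fin a → Fin b → Bool) :
    SignedBigraph (Fin a ⊕ Fin b) where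
  graph := cbsGraph a b
  sign := cbsSign sgn
  sign_symm := by
    intro u v
    cases u <;> cases v <;> rfl
  side := Sum.isLeft
  bipartite := fun _ _ h => h

/-- `M₁`: the all-negative 4-cycle. -/
def Mgraph1 : SignedBigraph (Fin 2 ⊕ Fin 2) :=
  completeSignedBigraph 2 2 (fun _ _ => false)

/-- `M₂`. -/
def Mgraph2 : SignedBigraph (Fin 2 ⊕ Fin 3) :=
  completeSignedBigraph 2 3
    (fun i j => ! decide ((i = 0 ∧ (j = 0 ∨ j = 1)) ∨ (i = 1 ∧ (j = 1 ∨ j = 2))))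

/-- `M₃`. -/
def Mgraph3 : SignedBigraph (Fin 2 ⊕ Fin 4) :=
  completeSignedBigraph 2 4
    (fun i j => ! decide ((i = 0 ∧ (j = 0 ∨ j = 1)) ∨ (i = 1 ∧ (j = 2 ∨ j = 3))))

/-- `M₄`. -/
def Mgraph4 : SignedBigraph (Fin 3 ⊕ Fin 3) :=
  completeSignedBigraph 3 3 (fun i j => ! decide ((i : ℕ) = (j : ℕ)))

/-- `M₅`. -/
def Mgraph5 : SignedBigraph (Fin 3 ⊕ Fin 3) :=
  completeSignedBigraph 3 3
    (fun i j => ! decide ((i = 0 ∧ (j = 0 ∨ j = 1)) ∨ (i = 1 ∧ j = 1) ∨ (i = 2 ∧ j = 2)))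


/-!
An edge `ab` of a complete signed bigraph is signed simplicial exactly when every edge disjoint
from it is positive. In each `Mᵢ` every edge is disjoint from some negative edge, so an elimination
ordering cannot even begin. The graphs `Mᵢ - v` have at most six edges, and an elimination ordering
for each of them is found by a finite search.

Every member of `F₂`, `F₃`, `F₄` is an induced complete bigraph with prescribed negative edges. If
all its other edges are positive it is `M₂`, `M₃` or `M₄`. Otherwise one more negative edge closes an
all-negative 4-cycle (`M₁`) or an all-negative path of length four inside a `K₂,₃`, i.e. a member
of `F₂`, which in turn yields `M₁` or `M₂`. The one exception is a member of `F₄` with a single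
negative edge off the matching: that is `M₅`.
-/

namespace SignedBigraph

variable {V : Type u}

@[ext]
theorem ext {G H : SignedBigraph V} (hgraph : G.graph = H.graph) (hsign : G.sign = H.sign)
    (hside : G.side = H.side) : G = H := by
  cases G; cases H; cases hgraph; cases hsign; cases hside; rfl

@[simp]
theorem deleteEdges_empty (G : SignedBigraph V) : G.deleteEdges ∅ = G := by
  ext1 <;> simp [deleteEdges]

theorem deleteEdges_deleteEdges (G : SignedBigraph V) (s t : Set (Sym2 V)) :
    (G.deleteEdges s).deleteEdges t = G.deleteEdges (s ∪ t) := by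
  ext1 <;> simp [deleteEdges, SimpleGraph.deleteEdges_deleteEdges]

theorem adj_comm {G : SignedBigraph V} {a b : V} : G.Adj a b ↔ G.Adj b a :=
  G.graph.adj_comm a b

@[simp]
theorem adj_irrefl {G : SignedBigraph V} (a : V) : ¬ G.Adj a a :=
  G.graph.loopless.irrefl a

theorem SignedSimplicial.symm {G : SignedBigraph V} {a b : V} (h : G.SignedSimplicial a b) :
    G.SignedSimplicial b a := by
  have : G.edgeNbhd b a = G.edgeNbhd a b := by
    simp only [edgeNbhd, Set.union_comm, Set.pair_comm]
  exact ⟨h.1.symm, this ▸ h.2⟩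

theorem isChordal_of_forall_not_adj {G : SignedBigraph V} (h : ∀ a b, ¬ G.Adj a b) :
    G.IsChordal :=
  ⟨[], List.nodup_nil, fun e => by
    induction e using Sym2.ind with
    | _ a b => simpa [Adj] using h a b, fun i hi => absurd hi (by simp)⟩

theorem IsChordal.of_deleteEdge {G : SignedBigraph V} {a b : V}
    (hab : G.SignedSimplicial a b) (h : (G.deleteEdges {s(a, b)}).IsChordal) :
    G.IsChordal := by
  obtain ⟨l, hnd, hmem, hsimp⟩ := h
  have hl : ∀ e, e ∈ l ↔ e ∈ G.graph.edgeSet ∧ e ≠ s(a, b) := fun e => by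
    rw [← hmem]; simp [deleteEdges, SimpleGraph.edgeSet_deleteEdges]
  refine ⟨s(a, b) :: l, List.nodup_cons.mpr ⟨fun h => ((hl _).mp h).2 rfl, hnd⟩,
    fun e => ?_, ?_⟩
  · have : s(a, b) ∈ G.graph.edgeSet := hab.1
    by_cases he : e = s(a, b) <;> simp [he, hl, this]
  · rintro (_ | i) hi
    · exact ⟨a, b, rfl, by simpa using hab⟩
    · obtain ⟨c, d, hcd, hs⟩ := hsimp i (by simpa using hi)
      have : {e | e ∈ s(a, b) :: l.take i} = {s(a, b)} ∪ {e | e ∈ l.take i} := by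
        ext; simp
      exact ⟨c, d, hcd, by rwa [List.take_succ_cons, this, ← deleteEdges_deleteEdges]⟩

theorem not_isChordal_of_forall_not_signedSimplicial {G : SignedBigraph V} {a b : V}
    (hab : G.Adj a b) (h : ∀ c d, ¬ G.SignedSimplicial c d) : ¬ G.IsChordal := by
  rintro ⟨l, -, hmem, hs⟩
  have hl : l ≠ [] := List.ne_nil_of_mem ((hmem s(a, b)).mp hab)
  obtain ⟨c, d, -, hcd⟩ := hs 0 (List.length_pos_iff.mpr hl)
  have : {e : Sym2 V | e ∈ l.take 0} = ∅ := by simp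
  rw [this, deleteEdges_empty] at hcd
  exact h c d hcd

def EliminableIn : ℕ → SignedBigraph V → Prop
  | 0, G => ∀ a b, ¬ G.Adj a b
  | n + 1, G => (∀ a b, ¬ G.Adj a b) ∨
      ∃ a b, G.SignedSimplicial a b ∧ (G.deleteEdges {s(a, b)}).EliminableIn n

theorem EliminableIn.isChordal :
    ∀ {n : ℕ} {G : SignedBigraph V}, G.EliminableIn n → G.IsChordal
  | 0, _, h => isChordal_of_forall_not_adj h
  | _ + 1, _, .inl h => isChordal_of_forall_not_adj h
  | _ + 1, _, .inr ⟨_, _, hab, h⟩ => h.isChordal.of_deleteEdge hab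

section Decidable

variable [Fintype V] [DecidableEq V]

instance (G : SignedBigraph V) [DecidableRel G.graph.Adj] : DecidableRel G.Adj :=
  inferInstanceAs (DecidableRel G.graph.Adj)

instance (G : SignedBigraph V) [DecidableRel G.graph.Adj] (a b : V) :
    Decidable (G.SignedSimplicial a b) := by
  unfold SignedSimplicial edgeNbhd; infer_instance

instance (G : SignedBigraph V) [DecidableRel G.graph.Adj] (e : Sym2 V) :
    DecidableRel (G.deleteEdges {e}).graph.Adj := fun a b =>
  decidable_of_iff (G.graph.Adj a b ∧ s(a, b) ≠ e) (by simp [deleteEdges])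

instance (G : SignedBigraph V) [DecidableRel G.graph.Adj] (A : Set V) :
    DecidableRel (G.induce A).graph.Adj := fun a b =>
  inferInstanceAs (Decidable (G.graph.Adj a b))

instance decidableEliminableIn :
    ∀ (n : ℕ) (G : SignedBigraph V) [DecidableRel G.graph.Adj], Decidable (G.EliminableIn n)
  | 0, G, _ => inferInstanceAs (Decidable (∀ a b, ¬ G.Adj a b))
  | n + 1, G, _ =>
    have := fun a b => decidableEliminableIn n (G.deleteEdges {s(a, b)})
    inferInstanceAs (Decidable ((∀ a b, ¬ G.Adj a b) ∨
      ∃ a b, G.SignedSimplicial a b ∧ (G.deleteEdges {s(a, b)}).EliminableIn n))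

end Decidable

end SignedBigraph

namespace completeSignedBigraph

open SignedBigraph

variable {a b : ℕ} {sgn : Fin a → Fin b → Bool}

instance : DecidableRel (completeSignedBigraph a b sgn).graph.Adj := fun u v =>
  inferInstanceAs (Decidable (u.isLeft ≠ v.isLeft))

theorem signedSimplicial_inl_inr_iff {i : Fin a} {j : Fin b} :
    (completeSignedBigraph a b sgn).SignedSimplicial (.inl i) (.inr j) ↔
      ∀ i' j', i' ≠ i → j' ≠ j → sgn i' j' = true := by
  constructor
  · intro h i' j' hi hj
    refine (h.2 (.inl i') ?_ (.inr j') ?_ (by simp [completeSignedBigraph])).2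
    all_goals simp_all [edgeNbhd, completeSignedBigraph, cbsGraph]
  · intro h
    refine ⟨by simp [SignedBigraph.Adj, completeSignedBigraph, cbsGraph], ?_⟩
    rintro (i' | j') hc (i'' | j'') hd hside
    all_goals simp_all [edgeNbhd, completeSignedBigraph, cbsGraph, SignedBigraph.Adj, cbsSign]

theorem not_isChordal [NeZero a] [NeZero b]
    (h : ∀ i j, ∃ i' j', i' ≠ i ∧ j' ≠ j ∧ sgn i' j' = false) :
    ¬ (completeSignedBigraph a b sgn).IsChordal := by
  have hij : ∀ i j, ¬ (completeSignedBigraph a b sgn).SignedSimplicial (.inl i) (.inr j) := by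
    intro i j hs
    obtain ⟨i', j', hi, hj, hneg⟩ := h i j
    simp [signedSimplicial_inl_inr_iff.mp hs i' j' hi hj] at hneg
  refine not_isChordal_of_forall_not_signedSimplicial (a := .inl 0) (b := .inr 0)
    (by simp [SignedBigraph.Adj, completeSignedBigraph, cbsGraph]) ?_
  rintro (i | j) (i' | j') hs
  · exact hs.1 rfl
  · exact hij i j' hs
  · exact hij i' j hs.symm
  · exact hs.1 rfl

end completeSignedBigraph

theorem Mgraph1_induce_ne_eliminableIn : ∀ v, (Mgraph1.induce {u | u ≠ v}).EliminableIn 6 := by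
  unfold Mgraph1; decide +kernel

theorem Mgraph2_induce_ne_eliminableIn : ∀ v, (Mgraph2.induce {u | u ≠ v}).EliminableIn 6 := by
  unfold Mgraph2; decide +kernel

theorem Mgraph3_induce_ne_eliminableIn : ∀ v, (Mgraph3.induce {u | u ≠ v}).EliminableIn 6 := by
  unfold Mgraph3; decide +kernel

theorem Mgraph4_induce_ne_eliminableIn : ∀ v, (Mgraph4.induce {u | u ≠ v}).EliminableIn 6 := by
  unfold Mgraph4; decide +kernel

theorem Mgraph5_induce_ne_eliminableIn : ∀ v, (Mgraph5.induce {u | u ≠ v}).EliminableIn 6 := by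
  unfold Mgraph5; decide +kernel

namespace SignedBigraph

variable {V : Type u} {G : SignedBigraph V}

structure IsInducedBiclique (G : SignedBigraph V) {m n : ℕ} (x : Fin m → V) (y : Fin n → V) :
    Prop where
  injective_left : Function.Injective x
  injective_right : Function.Injective y
  adj : ∀ i j, G.Adj (x i) (y j)
  not_adj_left : ∀ i i', ¬ G.Adj (x i) (x i')
  not_adj_right : ∀ j j', ¬ G.Adj (y j) (y j')

namespace IsInducedBiclique

variable {m n : ℕ} {x : Fin m → V} {y : Fin n → V}

theorem of_nodup (hnd : (List.ofFn x ++ List.ofFn y).Nodup) (hadj : ∀ i j, G.Adj (x i) (y j))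
    (hx : ∀ i i', ¬ G.Adj (x i) (x i')) (hy : ∀ j j', ¬ G.Adj (y j) (y j')) :
    G.IsInducedBiclique x y :=
  have hnd := List.nodup_append.mp hnd
  ⟨List.nodup_ofFn.mp hnd.1, List.nodup_ofFn.mp hnd.2.1, hadj, hx, hy⟩

theorem symm (h : G.IsInducedBiclique x y) : G.IsInducedBiclique y x :=
  ⟨h.injective_right, h.injective_left, fun j i => (h.adj i j).symm, h.not_adj_right,
    h.not_adj_left⟩

theorem comp (h : G.IsInducedBiclique x y) {m' n' : ℕ} {f : Fin m' → Fin m}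
    {g : Fin n' → Fin n} (hf : Function.Injective f) (hg : Function.Injective g) :
    G.IsInducedBiclique (x ∘ f) (y ∘ g) :=
  ⟨h.injective_left.comp hf, h.injective_right.comp hg, fun _ _ => h.adj _ _,
    fun _ _ => h.not_adj_left _ _, fun _ _ => h.not_adj_right _ _⟩

theorem comp_right (h : G.IsInducedBiclique x y) {n' : ℕ} {g : Fin n' → Fin n}
    (hg : Function.Injective g) : G.IsInducedBiclique x (y ∘ g) :=
  h.comp Function.injective_id hg

theorem nodup (h : G.IsInducedBiclique x y) : (List.ofFn x ++ List.ofFn y).Nodup :=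
  List.nodup_append.mpr ⟨List.nodup_ofFn.mpr h.injective_left,
    List.nodup_ofFn.mpr h.injective_right, by
      simp only [List.mem_ofFn]
      rintro _ ⟨i, rfl⟩ _ ⟨j, rfl⟩
      exact G.graph.ne_of_adj (h.adj i j)⟩

end IsInducedBiclique

def HasSomeM (G : SignedBigraph V) : Prop :=
  G.HasM1 ∨ G.HasM2 ∨ G.HasM3 ∨ G.HasM4 ∨ G.HasM5

namespace IsInducedBiclique

theorem hasM1 {x y : Fin 2 → V} (h : G.IsInducedBiclique x y)
    (hs : ∀ i j, G.sign (x i) (y j) = false) : G.HasM1 :=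
  ⟨x 0, x 1, y 0, y 1, h.nodup, h.adj 0 0, h.adj 0 1, h.adj 1 0, h.adj 1 1,
    h.not_adj_left 0 1, h.not_adj_right 0 1, hs 0 0, hs 0 1, hs 1 0, hs 1 1⟩

theorem hasM2 {x : Fin 2 → V} {y : Fin 3 → V} (h : G.IsInducedBiclique x y)
    (h00 : G.sign (x 0) (y 0) = false) (h01 : G.sign (x 0) (y 1) = false)
    (h11 : G.sign (x 1) (y 1) = false) (h12 : G.sign (x 1) (y 2) = false)
    (h02 : G.sign (x 0) (y 2) = true) (h10 : G.sign (x 1) (y 0) = true) : G.HasM2 :=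
  ⟨x 0, x 1, y 0, y 1, y 2, h.nodup, h.adj 0 0, h.adj 0 1, h.adj 0 2,
    h.adj 1 0, h.adj 1 1, h.adj 1 2, h.not_adj_left 0 1, h.not_adj_right 0 1,
    h.not_adj_right 0 2, h.not_adj_right 1 2, h00, h01, h11, h12, h02, h10⟩

theorem hasM3 {x : Fin 2 → V} {y : Fin 4 → V} (h : G.IsInducedBiclique x y)
    (h00 : G.sign (x 0) (y 0) = false) (h01 : G.sign (x 0) (y 1) = false)
    (h12 : G.sign (x 1) (y 2) = false) (h13 : G.sign (x 1) (y 3) = false)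
    (h02 : G.sign (x 0) (y 2) = true) (h03 : G.sign (x 0) (y 3) = true)
    (h10 : G.sign (x 1) (y 0) = true) (h11 : G.sign (x 1) (y 1) = true) : G.HasM3 :=
  ⟨x 0, x 1, y 0, y 1, y 2, y 3, h.nodup, h.adj 0 0, h.adj 0 1, h.adj 0 2, h.adj 0 3,
    h.adj 1 0, h.adj 1 1, h.adj 1 2, h.adj 1 3, h.not_adj_left 0 1, h.not_adj_right 0 1,
    h.not_adj_right 0 2, h.not_adj_right 0 3, h.not_adj_right 1 2, h.not_adj_right 1 3,
    h.not_adj_right 2 3, h00, h01, h12, h13, h02, h03, h10, h11⟩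

theorem hasM4 {x y : Fin 3 → V} (h : G.IsInducedBiclique x y)
    (hdiag : ∀ i, G.sign (x i) (y i) = false)
    (hoff : ∀ i j, i ≠ j → G.sign (x i) (y j) = true) : G.HasM4 :=
  ⟨x 0, x 1, x 2, y 0, y 1, y 2, h.nodup, h.adj 0 0, h.adj 0 1, h.adj 0 2,
    h.adj 1 0, h.adj 1 1, h.adj 1 2, h.adj 2 0, h.adj 2 1, h.adj 2 2,
    h.not_adj_left 0 1, h.not_adj_left 0 2, h.not_adj_left 1 2,
    h.not_adj_right 0 1, h.not_adj_right 0 2, h.not_adj_right 1 2,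
    hdiag 0, hdiag 1, hdiag 2, hoff 0 1 (by decide), hoff 0 2 (by decide),
    hoff 1 0 (by decide), hoff 1 2 (by decide), hoff 2 0 (by decide), hoff 2 1 (by decide)⟩

theorem hasM5 {x y : Fin 3 → V} (h : G.IsInducedBiclique x y)
    (hdiag : ∀ i, G.sign (x i) (y i) = false) (h01 : G.sign (x 0) (y 1) = false)
    (h02 : G.sign (x 0) (y 2) = true) (h10 : G.sign (x 1) (y 0) = true)
    (h12 : G.sign (x 1) (y 2) = true) (h20 : G.sign (x 2) (y 0) = true)
    (h21 : G.sign (x 2) (y 1) = true) : G.HasM5 :=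
  ⟨x 0, x 1, x 2, y 0, y 1, y 2, h.nodup, h.adj 0 0, h.adj 0 1, h.adj 0 2,
    h.adj 1 0, h.adj 1 1, h.adj 1 2, h.adj 2 0, h.adj 2 1, h.adj 2 2,
    h.not_adj_left 0 1, h.not_adj_left 0 2, h.not_adj_left 1 2,
    h.not_adj_right 0 1, h.not_adj_right 0 2, h.not_adj_right 1 2,
    hdiag 0, h01, hdiag 1, hdiag 2, h02, h10, h12, h20, h21⟩

theorem hasSomeM_of_F2 {x : Fin 2 → V} {y : Fin 3 → V} (h : G.IsInducedBiclique x y)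
    (h00 : G.sign (x 0) (y 0) = false) (h01 : G.sign (x 0) (y 1) = false)
    (h11 : G.sign (x 1) (y 1) = false) (h12 : G.sign (x 1) (y 2) = false) : G.HasSomeM := by
  by_cases h10 : G.sign (x 1) (y 0) = false
  · refine .inl ((h.comp_right (g := ![0, 1]) (by decide)).hasM1 ?_)
    intro i j; fin_cases i <;> fin_cases j <;> assumption
  by_cases h02 : G.sign (x 0) (y 2) = false
  · refine .inl ((h.comp_right (g := ![1, 2]) (by decide)).hasM1 ?_)
    intro i j; fin_cases i <;> fin_cases j <;> assumption
  exact .inr (.inl (h.hasM2 h00 h01 h11 h12 (by simpa using h02) (by simpa using h10)))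

theorem hasSomeM_of_F3 {x : Fin 2 → V} {y : Fin 4 → V} (h : G.IsInducedBiclique x y)
    (h00 : G.sign (x 0) (y 0) = false) (h01 : G.sign (x 0) (y 1) = false)
    (h12 : G.sign (x 1) (y 2) = false) (h13 : G.sign (x 1) (y 3) = false) : G.HasSomeM := by
  by_cases h02 : G.sign (x 0) (y 2) = false
  · exact (h.comp_right (g := ![0, 2, 3]) (by decide)).hasSomeM_of_F2 h00 h02 h12 h13
  by_cases h03 : G.sign (x 0) (y 3) = false
  · exact (h.comp_right (g := ![0, 3, 2]) (by decide)).hasSomeM_of_F2 h00 h03 h13 h12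
  by_cases h10 : G.sign (x 1) (y 0) = false
  · exact (h.comp (f := ![1, 0]) (g := ![2, 0, 1]) (by decide) (by decide)).hasSomeM_of_F2
      h12 h10 h00 h01
  by_cases h11 : G.sign (x 1) (y 1) = false
  · exact (h.comp (f := ![1, 0]) (g := ![2, 1, 0]) (by decide) (by decide)).hasSomeM_of_F2
      h12 h11 h01 h00
  simp only [Bool.not_eq_false] at h02 h03 h10 h11
  exact .inr (.inr (.inl (h.hasM3 h00 h01 h12 h13 h02 h03 h10 h11)))

theorem hasSomeM_of_F4_of_sign_zero_one {x y : Fin 3 → V} (h : G.IsInducedBiclique x y)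
    (hdiag : ∀ i, G.sign (x i) (y i) = false) (h01 : G.sign (x 0) (y 1) = false) :
    G.HasSomeM := by
  -- Any further negative edge closes a negative 4-cycle or a negative path of length four,
  -- the latter a member of `F₂`, with the sides exchanged for `x₀y₂` and `x₂y₀`.
  have hdiag' : ∀ i, G.sign (y i) (x i) = false := fun i => (G.sign_symm _ _).trans (hdiag i)
  by_cases h10 : G.sign (x 1) (y 0) = false
  · refine .inl ((h.comp (f := ![0, 1]) (g := ![0, 1]) (by decide) (by decide)).hasM1 ?_)
    intro i j; fin_cases i <;> fin_cases j
    exacts [hdiag 0, h01, h10, hdiag 1]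
  by_cases h12 : G.sign (x 1) (y 2) = false
  · exact (h.comp (f := ![0, 1]) (g := id) (by decide) Function.injective_id).hasSomeM_of_F2
      (hdiag 0) h01 (hdiag 1) h12
  by_cases h02 : G.sign (x 0) (y 2) = false
  · exact (h.symm.comp (f := ![1, 2]) (g := ![1, 0, 2]) (by decide) (by decide)).hasSomeM_of_F2
      (hdiag' 1) ((G.sign_symm _ _).trans h01) ((G.sign_symm _ _).trans h02) (hdiag' 2)
  by_cases h20 : G.sign (x 2) (y 0) = false
  · exact (h.symm.comp (f := ![1, 0]) (g := ![1, 0, 2]) (by decide) (by decide)).hasSomeM_of_F2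
      (hdiag' 1) ((G.sign_symm _ _).trans h01) (hdiag' 0) ((G.sign_symm _ _).trans h20)
  by_cases h21 : G.sign (x 2) (y 1) = false
  · exact (h.comp (f := ![0, 2]) (g := id) (by decide) Function.injective_id).hasSomeM_of_F2
      (hdiag 0) h01 h21 (hdiag 2)
  simp only [Bool.not_eq_false] at h10 h12 h02 h20 h21
  exact .inr (.inr (.inr (.inr (h.hasM5 hdiag h01 h02 h10 h12 h20 h21))))

theorem hasSomeM_of_F4 {x y : Fin 3 → V} (h : G.IsInducedBiclique x y)
    (hdiag : ∀ i, G.sign (x i) (y i) = false) : G.HasSomeM := by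
  by_cases hneg : ∃ i j, i ≠ j ∧ G.sign (x i) (y j) = false
  · obtain ⟨i, j, hij, hsign⟩ := hneg
    have hσ : ∀ i j : Fin 3, i ≠ j → ∃ σ : Equiv.Perm (Fin 3), σ 0 = i ∧ σ 1 = j := by
      decide
    obtain ⟨σ, rfl, rfl⟩ := hσ i j hij
    exact (h.comp σ.injective σ.injective).hasSomeM_of_F4_of_sign_zero_one
      (fun k => hdiag (σ k)) hsign
  · refine .inr (.inr (.inr (.inl (h.hasM4 hdiag fun i j hij => ?_))))
    simpa using fun hsign => hneg ⟨i, j, hij, hsign⟩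

end IsInducedBiclique

theorem HasF2.hasSomeM (hF : G.HasF2) : G.HasSomeM := by
  obtain ⟨u1, u2, v1, v2, v3, hnd, a11, a12, a13, a21, a22, a23, nu, nv12, nv13, nv23,
    s11, s12, s22, s23⟩ := hF
  refine (IsInducedBiclique.of_nodup (x := ![u1, u2]) (y := ![v1, v2, v3]) hnd ?_ ?_ ?_
    ).hasSomeM_of_F2 s11 s12 s22 s23
  all_goals simp [Fin.forall_fin_succ, adj_comm, *]

theorem HasF3.hasSomeM (hF : G.HasF3) : G.HasSomeM := by
  obtain ⟨u1, u2, v1, v2, v3, v4, hnd, a11, a12, a13, a14, a21, a22, a23, a24, nu, nv12, nv13,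
    nv14, nv23, nv24, nv34, s11, s12, s23, s24⟩ := hF
  refine (IsInducedBiclique.of_nodup (x := ![u1, u2]) (y := ![v1, v2, v3, v4]) hnd ?_ ?_ ?_
    ).hasSomeM_of_F3 s11 s12 s23 s24
  all_goals simp [Fin.forall_fin_succ, adj_comm, *]

theorem HasF4.hasSomeM (hF : G.HasF4) : G.HasSomeM := by
  obtain ⟨u1, u2, u3, v1, v2, v3, hnd, a11, a12, a13, a21, a22, a23, a31, a32, a33, nu12, nu13,
    nu23, nv12, nv13, nv23, s11, s22, s33⟩ := hF
  refine (IsInducedBiclique.of_nodup (x := ![u1, u2, u3]) (y := ![v1, v2, v3]) hnd ?_ ?_ ?_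
    ).hasSomeM_of_F4 ?_
  all_goals simp [Fin.forall_fin_succ, adj_comm, *]

end SignedBigraph

open SignedBigraph in
/-- each of `M₁, …, M₅` is not chordal, deleting any single vertex
from any of them yields a chordal signed bigraph, and every member of
`F₁ ∪ F₂ ∪ F₃ ∪ F₄` contains one of `M₁, …, M₅` as an induced subgraph. -/
theorem Mgraphs_minimal_nonchordal :
    (¬ Mgraph1.IsChordal ∧ ¬ Mgraph2.IsChordal ∧ ¬ Mgraph3.IsChordal ∧
      ¬ Mgraph4.IsChordal ∧ ¬ Mgraph5.IsChordal) ∧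
    ((∀ v, (Mgraph1.induce {u | u ≠ v}).IsChordal) ∧
      (∀ v, (Mgraph2.induce {u | u ≠ v}).IsChordal) ∧
      (∀ v, (Mgraph3.induce {u | u ≠ v}).IsChordal) ∧
      (∀ v, (Mgraph4.induce {u | u ≠ v}).IsChordal) ∧
      (∀ v, (Mgraph5.induce {u | u ≠ v}).IsChordal)) ∧
    (∀ (V : Type u) (G : SignedBigraph V),
      (G.HasF1 ∨ G.HasF2 ∨ G.HasF3 ∨ G.HasF4) →
      (G.HasM1 ∨ G.HasM2 ∨ G.HasM3 ∨ G.HasM4 ∨ G.HasM5)) := by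
  refine ⟨⟨?_, ?_, ?_, ?_, ?_⟩, ⟨?_, ?_, ?_, ?_, ?_⟩, ?_⟩
  iterate 5 exact completeSignedBigraph.not_isChordal (by decide)
  · exact fun v => (Mgraph1_induce_ne_eliminableIn v).isChordal
  · exact fun v => (Mgraph2_induce_ne_eliminableIn v).isChordal
  · exact fun v => (Mgraph3_induce_ne_eliminableIn v).isChordal
  · exact fun v => (Mgraph4_induce_ne_eliminableIn v).isChordal
  · exact fun v => (Mgraph5_induce_ne_eliminableIn v).isChordal
  · rintro V G (hF | hF | hF | hF)
    exacts [.inl hF, hF.hasSomeM, hF.hasSomeM, hF.hasSomeM]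
end

section
/- Let G be a non-separable bigraph with bipartition (X,Y) which has no isolated vertex, and let x_1,…,x_α, y_1,…,y_β be a canonical ordering of G. Then: (1) x_1 is adjacent to all vertices of Y; (2) every vertex of N(y_1) is adjacent to all vertices of Y; (3) for each x_i ∈ N(y_1) the edge x_iy_1 is a simplicial edge (in particular x_1y_1 is simplicial); (4) if x_iy_j is a simplicial edge then the graph obtained from G by deleting the edge x_iy_j is non-separable; (5) if x_iy_j is an edge that is not simplicial, then there exist x_k ∈ N(y_j) with k > i and y_ℓ ∈ N(x_i) with ℓ < j such that x_k and y_ℓ are not adjacent. -/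
universe u

/-!
Parts (1), (2), (3) and (5) only use the nestedness of the neighbourhoods in a canonical
ordering: a vertex adjacent to `xₖ` is adjacent to every earlier `xᵢ`, and a vertex adjacent
to `yⱼ` is adjacent to every later `yₗ`. For (4), an induced `2K₂` of `G - ab` that is not
one of `G` must have `ab` as one of its four cross pairs; the other ends of its two edges are
then neighbours of `a` and of `b` respectively, hence adjacent because `ab` is simplicial.
-/

namespace SimplicialEdge

variable {V : Type*} {G : SimpleGraph V} {a b : V}

theorem deleteEdges_adj (hs : SimplicialEdge G a b) {u v : V}
    (hu : (G.deleteEdges {s(a, b)}).Adj a u) (hv : (G.deleteEdges {s(a, b)}).Adj b v) :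
    (G.deleteEdges {s(a, b)}).Adj u v := by
  rw [SimpleGraph.deleteEdges_adj, Set.mem_singleton_iff] at hu hv ⊢
  obtain ⟨hau, hau'⟩ := hu
  obtain ⟨hbv, hbv'⟩ := hv
  have hub : u ≠ b := by rintro rfl; exact hau' rfl
  have hva : v ≠ a := by rintro rfl; exact hbv' Sym2.eq_swap
  refine ⟨hs.2 u ⟨hau, hub⟩ v ⟨hbv, hva⟩, ?_⟩
  rw [Sym2.eq_iff]
  rintro (⟨rfl, -⟩ | ⟨rfl, -⟩)
  · exact G.loopless.irrefl _ hau
  · exact hub rfl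

theorem deleteEdges_adj_of_adj_of_not_adj (hs : SimplicialEdge G a b) {u w u' w' : V}
    (huw : G.Adj u w) (hnuw : ¬ (G.deleteEdges {s(a, b)}).Adj u w)
    (hu : (G.deleteEdges {s(a, b)}).Adj u u') (hw : (G.deleteEdges {s(a, b)}).Adj w w') :
    (G.deleteEdges {s(a, b)}).Adj u' w' := by
  have hmem : s(u, w) = s(a, b) := by
    by_contra hne
    exact hnuw (SimpleGraph.deleteEdges_adj.mpr ⟨huw, hne⟩)
  rcases Sym2.eq_iff.mp hmem with ⟨rfl, rfl⟩ | ⟨rfl, rfl⟩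
  · exact hs.deleteEdges_adj hu hw
  · exact (hs.deleteEdges_adj hw hu).symm

theorem not_isSeparableGraph_deleteEdges (hs : SimplicialEdge G a b)
    (hns : ¬ IsSeparableGraph G) : ¬ IsSeparableGraph (G.deleteEdges {s(a, b)}) := by
  rintro ⟨p, q, r, t, hne, hpq, hrt, hpr, hpt, hqr, hqt⟩
  refine hns ⟨p, q, r, t, hne, hpq.1, hrt.1, fun h => ?_, fun h => ?_, fun h => ?_, fun h => ?_⟩
  · exact hqt (hs.deleteEdges_adj_of_adj_of_not_adj h hpr hpq hrt)
  · exact hqr (hs.deleteEdges_adj_of_adj_of_not_adj h hpt hpq hrt.symm)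
  · exact hpt (hs.deleteEdges_adj_of_adj_of_not_adj h hqr hpq.symm hrt)
  · exact hpr (hs.deleteEdges_adj_of_adj_of_not_adj h hqt hpq.symm hrt.symm)

end SimplicialEdge

namespace IsCanonicalOrdering

variable {V : Type*} {G : SimpleGraph V} {side : V → Bool} {α β : ℕ}
  {x : Fin α → V} {y : Fin β → V}

theorem adj_x_of_le (hcan : IsCanonicalOrdering G side x y) {i k : Fin α} (hik : i ≤ k)
    {v : V} (h : G.Adj (x k) v) : G.Adj (x i) v :=
  hcan.2.2.2.2.1 i k hik h

theorem adj_y_of_le (hcan : IsCanonicalOrdering G side x y) {j l : Fin β} (hjl : j ≤ l)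
    {v : V} (h : G.Adj (y j) v) : G.Adj (y l) v :=
  hcan.2.2.2.2.2 j l hjl h

theorem exists_y_eq_of_adj (hbip : ∀ ⦃a b : V⦄, G.Adj a b → side a ≠ side b)
    (hcan : IsCanonicalOrdering G side x y) {i : Fin α} {w : V} (h : G.Adj (x i) w) :
    ∃ l, y l = w := by
  have hx : side (x i) = true := (hcan.2.2.1 (x i)).2 ⟨i, rfl⟩
  have hw : side w = false := by simpa [hx] using (hbip h).symm
  exact (hcan.2.2.2.1 w).1 hw

theorem exists_x_eq_of_adj (hbip : ∀ ⦃a b : V⦄, G.Adj a b → side a ≠ side b)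
    (hcan : IsCanonicalOrdering G side x y) {j : Fin β} {w : V} (h : G.Adj (y j) w) :
    ∃ k, x k = w := by
  have hy : side (y j) = false := (hcan.2.2.2.1 (y j)).2 ⟨j, rfl⟩
  have hw : side w = true := by simpa [hy] using (hbip h).symm
  exact (hcan.2.2.1 w).1 hw

theorem adj_x_zero (hbip : ∀ ⦃a b : V⦄, G.Adj a b → side a ≠ side b)
    (hiso : ∀ v : V, ∃ w : V, G.Adj v w) (hcan : IsCanonicalOrdering G side x y)
    (hα : 0 < α) (j : Fin β) : G.Adj (x ⟨0, hα⟩) (y j) := by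
  obtain ⟨w, hw⟩ := hiso (y j)
  obtain ⟨k, rfl⟩ := exists_x_eq_of_adj hbip hcan hw
  exact hcan.adj_x_of_le (Nat.zero_le _) hw.symm

theorem simplicialEdge_y_zero (hbip : ∀ ⦃a b : V⦄, G.Adj a b → side a ≠ side b)
    (hcan : IsCanonicalOrdering G side x y) (hβ : 0 < β) {i : Fin α}
    (h : G.Adj (x i) (y ⟨0, hβ⟩)) : SimplicialEdge G (x i) (y ⟨0, hβ⟩) := by
  refine ⟨h, ?_⟩
  rintro c ⟨hc, -⟩ d ⟨hd, -⟩
  obtain ⟨l, rfl⟩ := exists_y_eq_of_adj hbip hcan hc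
  exact hcan.adj_y_of_le (Nat.zero_le _) hd

theorem exists_not_adj_of_not_simplicialEdge
    (hbip : ∀ ⦃a b : V⦄, G.Adj a b → side a ≠ side b)
    (hcan : IsCanonicalOrdering G side x y) {i : Fin α} {j : Fin β}
    (h : G.Adj (x i) (y j)) (hns : ¬ SimplicialEdge G (x i) (y j)) :
    ∃ (k : Fin α) (l : Fin β), i < k ∧ l < j ∧
      G.Adj (x k) (y j) ∧ G.Adj (x i) (y l) ∧ ¬ G.Adj (x k) (y l) := by
  simp only [SimplicialEdge, h, true_and, not_forall] at hns
  obtain ⟨c, ⟨hc, -⟩, d, ⟨hd, -⟩, hcd⟩ := hns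
  obtain ⟨l, rfl⟩ := exists_y_eq_of_adj hbip hcan hc
  obtain ⟨k, rfl⟩ := exists_x_eq_of_adj hbip hcan hd
  have hik : i < k := lt_of_not_ge fun hki => hcd (hcan.adj_x_of_le hki hc).symm
  have hlj : l < j := lt_of_not_ge fun hjl => hcd (hcan.adj_y_of_le hjl hd)
  exact ⟨k, l, hik, hlj, hd.symm, hc, fun h' => hcd h'.symm⟩

end IsCanonicalOrdering

/-- Lemma 3.1: basic properties of a canonical ordering of a
non-separable bigraph without isolated vertices. -/
theorem canonicalOrdering_properties
    {V : Type u} (G : SimpleGraph V) (side : V → Bool)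
    (hbip : ∀ ⦃a b : V⦄, G.Adj a b → side a ≠ side b)
    (hns : ¬ IsSeparableGraph G)
    (hiso : ∀ v : V, ∃ w : V, G.Adj v w)
    {α β : ℕ} (x : Fin α → V) (y : Fin β → V)
    (hcan : IsCanonicalOrdering G side x y) :
    -- (1) x₁ is adjacent to all vertices in Y
    (∀ (hα : 0 < α) (j : Fin β), G.Adj (x ⟨0, hα⟩) (y j)) ∧
    -- (2) each vertex in N(y₁) is adjacent to all vertices of Y
    (∀ (hβ : 0 < β) (v : V), G.Adj v (y ⟨0, hβ⟩) → ∀ j : Fin β, G.Adj v (y j)) ∧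
    -- (3) for each xᵢ ∈ N(y₁), xᵢy₁ is a simplicial edge
    (∀ (hβ : 0 < β) (i : Fin α), G.Adj (x i) (y ⟨0, hβ⟩) →
      SimplicialEdge G (x i) (y ⟨0, hβ⟩)) ∧
    -- (4) deleting a simplicial edge keeps the graph non-separable
    (∀ (i : Fin α) (j : Fin β), SimplicialEdge G (x i) (y j) →
      ¬ IsSeparableGraph (G.deleteEdges {s(x i, y j)})) ∧
    -- (5) a non-simplicial edge xᵢyⱼ yields xₖ ∈ N(yⱼ), k > i, and yₗ ∈ N(xᵢ),
    -- ℓ < j, with xₖ, yₗ non-adjacent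
    (∀ (i : Fin α) (j : Fin β), G.Adj (x i) (y j) →
      ¬ SimplicialEdge G (x i) (y j) →
      ∃ (k : Fin α) (l : Fin β), i < k ∧ l < j ∧
        G.Adj (x k) (y j) ∧ G.Adj (x i) (y l) ∧ ¬ G.Adj (x k) (y l)) :=
  ⟨hcan.adj_x_zero hbip hiso,
    fun _ _ hv _ => (hcan.adj_y_of_le (Nat.zero_le _) hv.symm).symm,
    fun hβ _ h => hcan.simplicialEdge_y_zero hbip hβ h,
    fun _ _ hs => hs.not_isSeparableGraph_deleteEdges hns,
    fun _ _ h hs => hcan.exists_not_adj_of_not_simplicialEdge hbip h hs⟩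
end

section
/- Every non-separable bigraph with bipartition (X,Y) admits a canonical ordering; that is, the vertices of X and Y can be ordered x_1,…,x_α and y_1,…,y_β respectively so that N(x_1) ⊇ N(x_2) ⊇ ⋯ ⊇ N(x_α) and N(y_1) ⊆ N(y_2) ⊆ ⋯ ⊆ N(y_β). -/
universe u

/-!
Two vertices `u`, `v` on the same side whose neighbourhoods are incomparable, witnessed by
`a ∈ N(u) \ N(v)` and `b ∈ N(v) \ N(u)`, span the induced `2K₂` formed by `ua` and `vb`.
Hence in a non-separable bigraph the neighbourhoods of each side form a chain under inclusion,
and listing each side in sorted order gives a canonical ordering.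
-/

theorem exists_equiv_fin_sorted {α : Type*} [Fintype α] (r : α → α → Prop)
    [Std.Total r] [IsTrans α r] :
    ∃ (n : ℕ) (e : Fin n ≃ α), ∀ i j, i ≤ j → r (e i) (e j) := by
  classical
  have : Std.Refl r := ⟨fun a => (total_of r a a).elim id id⟩
  let l := (Finset.univ : Finset α).toList.insertionSort r
  have hperm : l.Perm _ := List.perm_insertionSort r _
  have hnodup : l.Nodup := hperm.nodup_iff.2 (Finset.nodup_toList _)
  have hmem (a : α) : a ∈ l := hperm.mem_iff.2 (Finset.mem_toList.2 (Finset.mem_univ a))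
  exact ⟨l.length, hnodup.getEquivOfForallMemList l hmem,
    fun i j hij => (List.pairwise_insertionSort r _).rel_get_of_le hij⟩

theorem exists_injective_fin_range_eq_sorted {α : Type*} [Finite α] (P : α → Prop)
    (r : α → α → Prop) (total : ∀ a b, P a → P b → r a b ∨ r b a)
    (trans : ∀ a b c, r a b → r b c → r a c) :
    ∃ (n : ℕ) (f : Fin n → α), Function.Injective f ∧ Set.range f = {a | P a} ∧
      ∀ i j, i ≤ j → r (f i) (f j) := by
  have := Fintype.ofFinite {a // P a}
  let r' : {a // P a} → {a // P a} → Prop := fun a b => r a b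
  have : Std.Total r' := ⟨fun a b => total a b a.2 b.2⟩
  have : IsTrans _ r' := ⟨fun a b c => trans a b c⟩
  obtain ⟨n, e, he⟩ := exists_equiv_fin_sorted r'
  refine ⟨n, Subtype.val ∘ e, Subtype.val_injective.comp e.injective, ?_, he⟩
  rw [Set.range_comp, e.range_eq_univ, Set.image_univ, Subtype.range_coe_subtype]

theorem neighborSet_subset_or_subset_of_not_isSeparableGraph {V : Type*} {G : SimpleGraph V}
    {side : V → Bool} (hbip : ∀ ⦃a b : V⦄, G.Adj a b → side a ≠ side b)
    (hns : ¬ IsSeparableGraph G) {u v : V} (huv : side u = side v) :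
    G.neighborSet u ⊆ G.neighborSet v ∨ G.neighborSet v ⊆ G.neighborSet u := by
  by_contra! h
  obtain ⟨a, hua, hva⟩ := Set.not_subset.1 h.1
  obtain ⟨b, hvb, hub⟩ := Set.not_subset.1 h.2
  simp only [SimpleGraph.mem_neighborSet] at hua hva hvb hub
  have hsa : side a = !side u := Bool.eq_not_iff.2 (hbip hua).symm
  have hsb : side b = !side u := huv ▸ Bool.eq_not_iff.2 (hbip hvb).symm
  have hnuv : ¬ G.Adj u v := fun h => hbip h huv
  have hnab : ¬ G.Adj a b := fun h => hbip h (hsa.trans hsb.symm)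
  refine hns ⟨u, a, v, b, ?_, hua, hvb, hnuv, hub, fun h => hva h.symm, hnab⟩
  have hne : u ≠ v := by rintro rfl; exact hva hua
  have hub' : u ≠ b := by rintro rfl; exact hnuv hvb.symm
  have hav : a ≠ v := by rintro rfl; exact hnuv hua
  have hab : a ≠ b := by rintro rfl; exact hub hua
  simp [hua.ne, hvb.ne, hne, hub', hav, hab]

/-- every non-separable bigraph admits a canonical ordering. -/
theorem exists_canonicalOrdering
    {V : Type u} [Fintype V] (G : SimpleGraph V) (side : V → Bool)
    (hbip : ∀ ⦃a b : V⦄, G.Adj a b → side a ≠ side b)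
    (hns : ¬ IsSeparableGraph G) :
    ∃ (α β : ℕ) (x : Fin α → V) (y : Fin β → V),
      IsCanonicalOrdering G side x y := by
  have chain {u v : V} (huv : side u = side v) :=
    neighborSet_subset_or_subset_of_not_isSeparableGraph hbip hns huv
  obtain ⟨α, x, hx, hxX, hxmono⟩ := exists_injective_fin_range_eq_sorted
    (side · = true) (fun u v => G.neighborSet v ⊆ G.neighborSet u)
    (fun u v hu hv => (chain (hu.trans hv.symm)).symm) (fun _ _ _ h₁ h₂ => h₂.trans h₁)
  obtain ⟨β, y, hy, hyY, hymono⟩ := exists_injective_fin_range_eq_sorted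
    (side · = false) (fun u v => G.neighborSet u ⊆ G.neighborSet v)
    (fun u v hu hv => chain (hu.trans hv.symm)) (fun _ _ _ h₁ h₂ => h₁.trans h₂)
  exact ⟨α, β, x, y, hx, hy, fun w => by rw [hxX]; rfl, fun w => by rw [hyY]; rfl,
    hxmono, hymono⟩
end
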